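/- Suppose A belongs to the class 𝒜 and Φ satisfies condition δ2. Then for every x̄ ∈ l_Φ^A(X), one has ‖x̄‖_Φ^A = 1 if and only if ρ_Φ^A(x̄) = 1. -/

import Mathlib

/-
Norm and modular see `x` only through its row sums `r n`, so the theorem is a statement about
a nonnegative real sequence `r`. If `∑ φ_n(r_n) = 1`, then for `σ < 1` convexity gives
`φ_n(r_n) ≤ σ φ_n(r_n / σ) < φ_n(r_n / σ)` at some `n`, so `σ` is not admissible and the norm is `1`.
Conversely the infimum defining the norm is attained, so norm `1` gives `∑ φ_n(r_n) ≤ 1`. If the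
inequality were strict, δ₂ would make `φ_n(2 r_n)` summable, and dominated convergence as
`τ ↑ 1` would give an admissible `τ < 1`.
-/

open Filter Topology

/-- An Orlicz function: convex, nondecreasing, continuous on `[0,∞)`,
vanishing at `0`, positive on `(0,∞)`, tending to `∞` at `∞`. -/
structure IsOrliczFn (φ : ℝ → ℝ) : Prop where
  convexOn : ConvexOn ℝ (Set.Ici (0 : ℝ)) φ
  monotoneOn : MonotoneOn φ (Set.Ici (0 : ℝ))
  continuousOn : ContinuousOn φ (Set.Ici (0 : ℝ))
  map_zero : φ 0 = 0
  pos : ∀ t : ℝ, 0 < t → 0 < φ t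
  tendsto_atTop : Filter.Tendsto φ Filter.atTop Filter.atTop

/-- A Musielak-Orlicz function: a sequence of Orlicz functions. -/
def IsMusielakOrlicz (Φ : ℕ → ℝ → ℝ) : Prop := ∀ n, IsOrliczFn (Φ n)

/-- Condition δ₂ for a Musielak-Orlicz function. -/
def MOCondDelta2 (Φ : ℕ → ℝ → ℝ) : Prop :=
  ∃ K > (0 : ℝ), ∃ δ > (0 : ℝ), ∃ c : ℕ → ℝ, (∀ n, 0 ≤ c n) ∧ Summable c ∧
    ∀ n : ℕ, ∀ x : ℝ, 0 ≤ x → Φ n x ≤ δ → Φ n (2 * x) ≤ K * Φ n x + c n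

/-- Condition (*) for a Musielak-Orlicz function. -/
def MOCondStar (Φ : ℕ → ℝ → ℝ) : Prop :=
  ∀ ε : ℝ, ε ∈ Set.Ioo (0 : ℝ) 1 → ∃ δ > (0 : ℝ), ∀ n : ℕ, ∀ u : ℝ, 0 ≤ u →
    Φ n u < 1 - ε → Φ n ((1 + δ) * u) ≤ 1

/-- The class 𝒜 of infinite matrices: every column is nonzero. -/
def MatrixClassA (a : ℕ → ℕ → ℝ) : Prop := ∀ k, ∃ n, a n k ≠ 0

/-- A triangle matrix: nonzero diagonal, zero above the diagonal. -/
def IsTriangle (a : ℕ → ℕ → ℝ) : Prop := (∀ n, a n n ≠ 0) ∧ ∀ n k, n < k → a n k = 0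

/-- The `n`-th row sum `∑_k |a_{nk}| ‖x_k‖`. -/
noncomputable def rowSum {X : Type*} [NormedAddCommGroup X]
    (a : ℕ → ℕ → ℝ) (x : ℕ → X) (n : ℕ) : ℝ :=
  ∑' k, |a n k| * ‖x k‖

/-- Membership in the generalized Musielak-Orlicz sequence space `l_Φ^A(X)`:
`x` is a bounded sequence whose row sums are finite and
`∑_n φ_n(rowSum_n / σ) < ∞` for some `σ > 0`. -/
def MemL {X : Type*} [NormedAddCommGroup X]
    (Φ : ℕ → ℝ → ℝ) (a : ℕ → ℕ → ℝ) (x : ℕ → X) : Prop :=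
  (∃ C : ℝ, ∀ k, ‖x k‖ ≤ C) ∧ (∀ n, Summable fun k => |a n k| * ‖x k‖) ∧
    ∃ σ > (0 : ℝ), Summable fun n => Φ n (rowSum a x n / σ)

/-- Membership in `h_Φ^A(X)`: as `MemL` but for every `σ > 0`. -/
def MemH {X : Type*} [NormedAddCommGroup X]
    (Φ : ℕ → ℝ → ℝ) (a : ℕ → ℕ → ℝ) (x : ℕ → X) : Prop :=
  (∃ C : ℝ, ∀ k, ‖x k‖ ≤ C) ∧ (∀ n, Summable fun k => |a n k| * ‖x k‖) ∧
    ∀ σ > (0 : ℝ), Summable fun n => Φ n (rowSum a x n / σ)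

/-- The Luxemburg-type norm `‖x‖_Φ^A`. -/
noncomputable def ANorm {X : Type*} [NormedAddCommGroup X]
    (Φ : ℕ → ℝ → ℝ) (a : ℕ → ℕ → ℝ) (x : ℕ → X) : ℝ :=
  sInf {σ : ℝ | 0 < σ ∧ (Summable fun n => Φ n (rowSum a x n / σ)) ∧
    (∑' n, Φ n (rowSum a x n / σ)) ≤ 1}

/-- The modular `ρ_Φ^A(x) = ∑_n φ_n(∑_k |a_{nk}| ‖x_k‖)`. -/
noncomputable def rhoA {X : Type*} [NormedAddCommGroup X]
    (Φ : ℕ → ℝ → ℝ) (a : ℕ → ℕ → ℝ) (x : ℕ → X) : ℝ :=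
  ∑' n, Φ n (rowSum a x n)

/-- The `m`-th section of a sequence: first `m` coordinates kept, rest zero. -/
def sect {X : Type*} [Zero X] (x : ℕ → X) (m : ℕ) : ℕ → X :=
  fun k => if k < m then x k else 0

namespace IsOrliczFn

variable {φ : ℝ → ℝ}

lemma nonneg (h : IsOrliczFn φ) {t : ℝ} (ht : 0 ≤ t) : 0 ≤ φ t :=
  h.map_zero ▸ h.monotoneOn Set.self_mem_Ici ht ht

lemma map_mul_le (h : IsOrliczFn φ) {l t : ℝ} (hl0 : 0 ≤ l) (hl1 : l ≤ 1) (ht : 0 ≤ t) :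
    φ (l * t) ≤ l * φ t := by
  have := h.convexOn.2 (Set.mem_Ici.2 ht) Set.self_mem_Ici hl0 (sub_nonneg.2 hl1)
    (add_sub_cancel l 1)
  simpa [h.map_zero, smul_eq_mul] using this

lemma le_map_div (h : IsOrliczFn φ) {t σ : ℝ} (ht : 0 ≤ t) (hσ0 : 0 < σ) (hσ1 : σ ≤ 1) :
    φ t ≤ φ (t / σ) :=
  h.monotoneOn ht (div_nonneg ht hσ0.le) (le_div_self ht hσ0 hσ1)

lemma lt_map_div (h : IsOrliczFn φ) {t σ : ℝ} (ht : 0 < t) (hσ0 : 0 < σ) (hσ1 : σ < 1) :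
    φ t < φ (t / σ) :=
  calc φ t = φ (σ * (t / σ)) := by rw [mul_div_cancel₀ t hσ0.ne']
    _ ≤ σ * φ (t / σ) := h.map_mul_le hσ0.le hσ1.le (div_pos ht hσ0).le
    _ < φ (t / σ) := mul_lt_of_lt_one_left (h.pos _ (div_pos ht hσ0)) hσ1

lemma map_div_le_map_two_mul (h : IsOrliczFn φ) {t τ : ℝ} (ht : 0 ≤ t) (hτ : 1 / 2 ≤ τ) :
    φ (t / τ) ≤ φ (2 * t) := by
  have hτ0 : 0 < τ := by linarith
  refine h.monotoneOn (div_nonneg ht hτ0.le) (mul_nonneg zero_le_two ht) ?_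
  rw [div_le_iff₀ hτ0]
  nlinarith

lemma continuousAt_map_div (h : IsOrliczFn φ) {t s : ℝ} (ht : 0 ≤ t) (hs : 0 < s) :
    ContinuousAt (fun σ => φ (t / σ)) s :=
  (h.continuousOn.comp (continuousOn_const.div continuousOn_id fun _ hσ => ne_of_gt hσ)
    fun _ hσ => div_nonneg ht (le_of_lt hσ)).continuousAt (Ioi_mem_nhds hs)

end IsOrliczFn

/-- `ANorm Φ a x` is `sInf (luxemburgSet Φ (rowSum a x))`. -/
def luxemburgSet (Φ : ℕ → ℝ → ℝ) (r : ℕ → ℝ) : Set ℝ :=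
  {σ | 0 < σ ∧ (Summable fun n => Φ n (r n / σ)) ∧ ∑' n, Φ n (r n / σ) ≤ 1}

lemma rowSum_nonneg {X : Type*} [NormedAddCommGroup X] (a : ℕ → ℕ → ℝ) (x : ℕ → X) (n : ℕ) :
    0 ≤ rowSum a x n :=
  tsum_nonneg fun _ => mul_nonneg (abs_nonneg _) (norm_nonneg _)

section Luxemburg

variable {Φ : ℕ → ℝ → ℝ} {r : ℕ → ℝ}

lemma one_le_of_mem_luxemburgSet (hΦ : IsMusielakOrlicz Φ) (hr : ∀ n, 0 ≤ r n)
    (hρ : ∑' n, Φ n (r n) = 1) {σ : ℝ} (hσ : σ ∈ luxemburgSet Φ r) : 1 ≤ σ := by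
  obtain ⟨hσ0, hsum, hle⟩ := hσ
  by_contra! hσ1
  obtain ⟨m, hm⟩ : ∃ m, Φ m (r m) ≠ 0 := by
    by_contra! h
    simp [tsum_congr h] at hρ
  have hrm : 0 < r m :=
    (hr m).lt_of_ne fun h => hm (h ▸ (hΦ m).map_zero)
  have : ∑' n, Φ n (r n) < ∑' n, Φ n (r n / σ) :=
    hsum.tsum_lt_tsum_of_nonneg (fun n => (hΦ n).nonneg (hr n))
      (fun n => (hΦ n).le_map_div (hr n) hσ0 hσ1.le) ((hΦ m).lt_map_div hrm hσ0 hσ1)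
  linarith

/-- The infimum is attained: each partial sum of the modular at `sInf` is a limit of partial
sums bounded by `1`. -/
lemma sInf_mem_luxemburgSet (hΦ : IsMusielakOrlicz Φ) (hr : ∀ n, 0 ≤ r n)
    (hne : (luxemburgSet Φ r).Nonempty) (hpos : 0 < sInf (luxemburgSet Φ r)) :
    sInf (luxemburgSet Φ r) ∈ luxemburgSet Φ r := by
  set s := sInf (luxemburgSet Φ r)
  obtain ⟨σ, -, hσs, hσS⟩ := exists_seq_tendsto_sInf hne ⟨0, fun _ h => h.1.le⟩
  have hnonneg : ∀ n, 0 ≤ Φ n (r n / s) := fun n => (hΦ n).nonneg (div_nonneg (hr n) hpos.le)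
  have hpartial : ∀ N, ∑ n ∈ Finset.range N, Φ n (r n / s) ≤ 1 := by
    intro N
    refine le_of_tendsto
      (tendsto_finsetSum _ fun n _ => ((hΦ n).continuousAt_map_div (hr n) hpos).tendsto.comp hσs)
      (Eventually.of_forall fun j => ?_)
    obtain ⟨hσ0, hsum, hle⟩ := hσS j
    exact (hsum.sum_le_tsum _ fun n _ => (hΦ n).nonneg (div_nonneg (hr n) hσ0.le)).trans hle
  exact ⟨hpos, summable_of_sum_range_le hnonneg hpartial,
    Real.tsum_le_of_sum_range_le hnonneg hpartial⟩

/-- `Φ n (2 * r n)` is bounded by `K * Φ n (r n) + c n` as soon as `Φ n (r n) ≤ δ`, which holds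
eventually because `Φ n (r n) → 0`. -/
lemma MOCondDelta2.summable_two_mul (hδ : MOCondDelta2 Φ) (hΦ : IsMusielakOrlicz Φ)
    (hr : ∀ n, 0 ≤ r n) (hs : Summable fun n => Φ n (r n)) :
    Summable fun n => Φ n (2 * r n) := by
  obtain ⟨K, -, δ, hδ0, c, -, hc, hΔ⟩ := hδ
  refine ((hs.mul_left K).add hc).of_norm_bounded_eventually_nat ?_
  filter_upwards [hs.tendsto_atTop_zero.eventually_le_const hδ0] with n hn
  rw [Real.norm_of_nonneg ((hΦ n).nonneg (mul_nonneg zero_le_two (hr n)))]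
  exact hΔ n (r n) (hr n) hn

lemma tendsto_tsum_map_div_nhdsLT_one (hΦ : IsMusielakOrlicz Φ) (hr : ∀ n, 0 ≤ r n)
    (h2 : Summable fun n => Φ n (2 * r n)) :
    Tendsto (fun τ => ∑' n, Φ n (r n / τ)) (𝓝[<] 1) (𝓝 (∑' n, Φ n (r n))) := by
  refine tendsto_tsum_of_dominated_convergence h2
    (fun n => by simpa using
      ((hΦ n).continuousAt_map_div (hr n) one_pos).tendsto.mono_left nhdsWithin_le_nhds) ?_
  filter_upwards [Ioo_mem_nhdsLT (by norm_num : (1 / 2 : ℝ) < 1)] with τ hτ n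
  rw [Real.norm_of_nonneg ((hΦ n).nonneg (div_nonneg (hr n) (by linarith [hτ.1])))]
  exact (hΦ n).map_div_le_map_two_mul (hr n) hτ.1.le

lemma MOCondDelta2.exists_lt_one_mem_luxemburgSet (hδ : MOCondDelta2 Φ)
    (hΦ : IsMusielakOrlicz Φ) (hr : ∀ n, 0 ≤ r n) (hs : Summable fun n => Φ n (r n))
    (hρ : ∑' n, Φ n (r n) < 1) : ∃ τ < 1, τ ∈ luxemburgSet Φ r := by
  have h2 := hδ.summable_two_mul hΦ hr hs
  obtain ⟨τ, hτρ, hτ⟩ := ((tendsto_tsum_map_div_nhdsLT_one hΦ hr h2).eventually_lt_const hρ).and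
    (Ioo_mem_nhdsLT (by norm_num : (1 / 2 : ℝ) < 1)) |>.exists
  have hτ0 : 0 < τ := by linarith [hτ.1]
  refine ⟨τ, hτ.2, hτ0, h2.of_nonneg_of_le (fun n => (hΦ n).nonneg (div_nonneg (hr n) hτ0.le))
    fun n => (hΦ n).map_div_le_map_two_mul (hr n) hτ.1.le, hτρ.le⟩

theorem sInf_luxemburgSet_eq_one_iff (hΦ : IsMusielakOrlicz Φ) (hδ : MOCondDelta2 Φ)
    (hr : ∀ n, 0 ≤ r n) : sInf (luxemburgSet Φ r) = 1 ↔ ∑' n, Φ n (r n) = 1 := by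
  have hbdd : BddBelow (luxemburgSet Φ r) := ⟨0, fun _ h => h.1.le⟩
  constructor
  · intro hnorm
    have hne : (luxemburgSet Φ r).Nonempty := by
      by_contra h
      simp [Set.not_nonempty_iff_eq_empty.1 h] at hnorm
    obtain ⟨-, hs, hle⟩ := hnorm ▸ sInf_mem_luxemburgSet hΦ hr hne (hnorm ▸ one_pos)
    simp only [div_one] at hs hle
    refine hle.eq_or_lt.resolve_right fun hlt => ?_
    obtain ⟨τ, hτ1, hτ⟩ := hδ.exists_lt_one_mem_luxemburgSet hΦ hr hs hlt
    exact (csInf_le hbdd hτ).not_gt (hnorm ▸ hτ1)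
  · intro hρ
    have hs : Summable fun n => Φ n (r n) :=
      by_contra fun h => by simp [tsum_eq_zero_of_not_summable h] at hρ
    have h1 : (1 : ℝ) ∈ luxemburgSet Φ r := ⟨one_pos, by simpa using hs, by simp [hρ]⟩
    exact le_antisymm (csInf_le hbdd h1)
      (le_csInf ⟨1, h1⟩ fun _ hσ => one_le_of_mem_luxemburgSet hΦ hr hρ hσ)

end Luxemburg

theorem norm_eq_one_iff_modular_eq_one_on_l_general
    {X : Type*} [NormedAddCommGroup X]
    (Φ : ℕ → ℝ → ℝ) (hΦ : IsMusielakOrlicz Φ) (hδ : MOCondDelta2 Φ)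
    (a : ℕ → ℕ → ℝ) :
    ∀ x : ℕ → X, MemL Φ a x → (ANorm Φ a x = 1 ↔ rhoA Φ a x = 1) :=
  fun x _ => sInf_luxemburgSet_eq_one_iff hΦ hδ (rowSum_nonneg a x)

/-- for `A ∈ 𝒜`, `Φ ∈ δ₂` and `x̄ ∈ l_Φ^A(X)`,
`‖x̄‖_Φ^A = 1 ↔ ρ_Φ^A(x̄) = 1`. -/
theorem norm_eq_one_iff_modular_eq_one_on_l
    {X : Type*} [NormedAddCommGroup X] [NormedSpace ℝ X] [CompleteSpace X]
    (Φ : ℕ → ℝ → ℝ) (hΦ : IsMusielakOrlicz Φ) (hδ : MOCondDelta2 Φ)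
    (a : ℕ → ℕ → ℝ) (hA : MatrixClassA a) :
    ∀ x : ℕ → X, MemL Φ a x → (ANorm Φ a x = 1 ↔ rhoA Φ a x = 1) :=
  norm_eq_one_iff_modular_eq_one_on_l_general Φ hΦ hδ a
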